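/- The variance of the Hutchinson trace estimator with a single Rademacher vector is Var[(w, A w)] = 2 * (||A||_F^2 - sum_{i=1}^s a_{ii}^2), where A is an s × s real symmetric matrix. -/

import Mathlib

open MeasureTheory Matrix ProbabilityTheory

set_option linter.unreachableTactic false in
set_option linter.unnecessarySeqFocus false in
set_option linter.unusedTactic false in
lemma rademacher_even_four_iff {α : Type*} [DecidableEq α] (i j k l : α) :
    (∀ m : α, Even ((if m = i then 1 else 0) + (if m = j then 1 else 0)
        + (if m = k then 1 else 0) + (if m = l then 1 else 0)))
    ↔ ((i = j ∧ k = l) ∨ (i = k ∧ j = l) ∨ (i = l ∧ j = k)) := by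
  constructor
  · intro h
    have hi := h i; have hj := h j; have hk := h k; have hl := h l
    by_cases hij : i = j <;> by_cases hik : i = k <;> by_cases hil : i = l <;>
      by_cases hjk : j = k <;> by_cases hjl : j = l <;> by_cases hkl : k = l <;>
      simp_all [Nat.even_iff] <;> omega
  · rintro (⟨e1, e2⟩ | ⟨e1, e2⟩ | ⟨e1, e2⟩) m <;>
      by_cases h1 : m = i <;> by_cases h2 : m = j <;> by_cases h3 : m = k <;>
      by_cases h4 : m = l <;> simp_all [Nat.even_iff] <;> omega

set_option linter.unnecessarySeqFocus false in
lemma rademacher_pt {α : Type*} [DecidableEq α] (A : α → α → ℝ) (i j k l : α) :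
    A i j * A k l * (if ((i = j ∧ k = l) ∨ (i = k ∧ j = l) ∨ (i = l ∧ j = k))
        then (1:ℝ) else 0)
    = (if i = j then A i j else 0) * (if k = l then A k l else 0)
      + (if k = i ∧ l = j then A i j * A k l else 0)
      + (if k = j ∧ l = i then A i j * A k l else 0)
      - 2 * (if i = j ∧ k = i ∧ l = i then A i j * A k l else 0) := by
  by_cases h1 : i = j <;> by_cases h2 : k = l <;> by_cases h3 : i = k <;>
    by_cases h4 : j = l <;> by_cases h5 : i = l <;> by_cases h6 : j = k <;>
    simp_all [eq_comm] <;> try ring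

/-- The variance of the Hutchinson trace estimator with a single Rademacher vector:
`Var[wᵀ A w] = 2 (‖A‖_F² − ∑ᵢ aᵢᵢ²)` for a real symmetric `s × s` matrix `A` and a
Rademacher random vector `w` (independent `±1` components with probability `1/2` each). -/
theorem rademacher_quadratic_form_variance
    {Ω : Type*} [MeasurableSpace Ω] (μ : Measure Ω) [IsProbabilityMeasure μ]
    {s : ℕ} (A : Matrix (Fin s) (Fin s) ℝ) (hA : A.IsSymm)
    (w : Ω → Fin s → ℝ)
    (hmeas : ∀ j : Fin s, Measurable (fun ω => w ω j))
    (hindep : iIndepFun (fun (j : Fin s) ω => w ω j) μ)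
    (hplus : ∀ j : Fin s, μ {ω | w ω j = 1} = 1 / 2)
    (hminus : ∀ j : Fin s, μ {ω | w ω j = -1} = 1 / 2) :
    (∫ ω, ((w ω) ⬝ᵥ A.mulVec (w ω) - ∫ ω', (w ω') ⬝ᵥ A.mulVec (w ω') ∂μ) ^ 2 ∂μ) =
      2 * ((∑ i, ∑ j, (A i j) ^ 2) - ∑ i, (A i i) ^ 2) := by
  classical
  -- a.e., every coordinate is ±1
  have hae : ∀ᵐ ω ∂μ, ∀ j, w ω j = 1 ∨ w ω j = -1 := by
    rw [MeasureTheory.ae_all_iff]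
    intro j
    have h1 : MeasurableSet {ω | w ω j = 1} := hmeas j (measurableSet_singleton 1)
    have h2 : MeasurableSet {ω | w ω j = -1} := hmeas j (measurableSet_singleton (-1))
    have hdisj : Disjoint {ω | w ω j = 1} {ω | w ω j = -1} := by
      rw [Set.disjoint_left]
      intro ω hω1 hω2
      simp only [Set.mem_setOf_eq] at hω1 hω2
      rw [hω1] at hω2; norm_num at hω2
    have hu : μ ({ω | w ω j = 1} ∪ {ω | w ω j = -1}) = 1 := by
      rw [measure_union hdisj h2, hplus j, hminus j]
      exact ENNReal.add_halves 1
    rw [ae_iff]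
    have hset : {ω | ¬(w ω j = 1 ∨ w ω j = -1)} = ({ω | w ω j = 1} ∪ {ω | w ω j = -1})ᶜ := by
      ext ω; simp [not_or]
    rw [hset, measure_compl (h1.union h2) (measure_ne_top _ _), hu, measure_univ, tsub_self]
  -- integrability of products of powers
  have measP : ∀ f : Fin s → ℕ, Measurable (fun ω => ∏ m, (w ω m) ^ (f m)) := by
    intro f
    exact Finset.measurable_prod _ (fun m _ => (hmeas m).pow_const _)
  have intgP : ∀ f : Fin s → ℕ, Integrable (fun ω => ∏ m, (w ω m) ^ (f m)) μ := by
    intro f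
    refine Integrable.mono' (integrable_const (1:ℝ)) (measP f).aestronglyMeasurable ?_
    filter_upwards [hae] with ω hω
    rw [Real.norm_eq_abs, Finset.abs_prod]
    calc ∏ m, |w ω m ^ f m| = ∏ m, (1:ℝ) := by
          refine Finset.prod_congr rfl fun m _ => ?_
          rw [abs_pow]
          rcases hω m with h | h <;> simp [h]
      _ ≤ 1 := by simp
  -- integrability of products over finsets
  have intgT : ∀ T : Finset (Fin s), Integrable (fun ω => ∏ m ∈ T, w ω m) μ := by
    intro T
    refine Integrable.mono' (integrable_const (1:ℝ))
      (Finset.measurable_prod _ fun m _ => hmeas m).aestronglyMeasurable ?_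
    filter_upwards [hae] with ω hω
    rw [Real.norm_eq_abs, Finset.abs_prod]
    calc ∏ m ∈ T, |w ω m| = ∏ m ∈ T, (1:ℝ) := by
          refine Finset.prod_congr rfl fun m _ => ?_
          rcases hω m with h | h <;> simp [h]
      _ ≤ 1 := by simp
  -- integral of a single coordinate is 0
  have intW0 : ∀ j, ∫ ω, w ω j ∂μ = 0 := by
    intro j
    have h1 : MeasurableSet {ω | w ω j = 1} := hmeas j (measurableSet_singleton 1)
    have h2 : MeasurableSet {ω | w ω j = -1} := hmeas j (measurableSet_singleton (-1))
    have hcongr : (fun ω => w ω j) =ᵐ[μ]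
        (fun ω => Set.indicator {ω | w ω j = 1} (fun _ => (1:ℝ)) ω
          + Set.indicator {ω | w ω j = -1} (fun _ => (-1:ℝ)) ω) := by
      filter_upwards [hae] with ω hω
      rcases hω j with h | h <;>
        simp [Set.indicator_apply, Set.mem_setOf_eq, h] <;> norm_num
    rw [integral_congr_ae hcongr,
      integral_add ((integrable_const (1:ℝ)).indicator h1)
        ((integrable_const (-1:ℝ)).indicator h2),
      integral_indicator_const _ h1, integral_indicator_const _ h2, measureReal_def, measureReal_def,
      hplus j, hminus j]
    norm_num
  -- integral of product over finset factorizes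
  have prodInt : ∀ T : Finset (Fin s), (∫ ω, ∏ m ∈ T, w ω m ∂μ) = ∏ m ∈ T, ∫ ω, w ω m ∂μ := by
    intro T
    induction T using Finset.induction_on with
    | empty => simp
    | insert i T hi ih =>
      have hind : IndepFun (fun ω => ∏ m ∈ T, w ω m) (fun ω => w ω i) μ := by
        have := hindep.indepFun_finsetProd_of_notMem hmeas hi
        simpa [Finset.prod_fn] using this
      have := hind.symm.integral_fun_mul_eq_mul_integral (hmeas i).aestronglyMeasurable
        (Finset.measurable_prod _ fun m _ => hmeas m).aestronglyMeasurable
      simp only [Finset.prod_insert hi]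
      calc (∫ ω, w ω i * ∏ m ∈ T, w ω m ∂μ)
          = (∫ ω, w ω i ∂μ) * ∫ ω, ∏ m ∈ T, w ω m ∂μ := this
        _ = (∫ ω, w ω i ∂μ) * ∏ m ∈ T, ∫ ω, w ω m ∂μ := by rw [ih]
  have zeroInt : ∀ T : Finset (Fin s), T.Nonempty → (∫ ω, ∏ m ∈ T, w ω m ∂μ) = 0 := by
    intro T ⟨m, hm⟩
    rw [prodInt]
    exact Finset.prod_eq_zero hm (intW0 m)
  -- moments
  have momE : ∀ f : Fin s → ℕ, (∫ ω, ∏ m, (w ω m) ^ (f m) ∂μ)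
      = if ∀ m, Even (f m) then 1 else 0 := by
    intro f
    have hcongr : (fun ω => ∏ m, (w ω m) ^ (f m)) =ᵐ[μ]
        (fun ω => ∏ m ∈ Finset.univ.filter (fun m => ¬ Even (f m)), w ω m) := by
      filter_upwards [hae] with ω hω
      rw [Finset.prod_filter]
      refine Finset.prod_congr rfl fun m _ => ?_
      rcases hω m with h | h
      · simp [h]
      · rcases Nat.even_or_odd (f m) with he | ho
        · simp [h, he.neg_one_pow, he]
        · simp [h, ho.neg_one_pow, Nat.not_even_iff_odd.2 ho]
    rw [integral_congr_ae hcongr]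
    by_cases hf : ∀ m, Even (f m)
    · have : Finset.univ.filter (fun m => ¬ Even (f m)) = ∅ := by
        simp [Finset.filter_eq_empty_iff, hf]
      rw [this, if_pos hf]
      simp
    · rw [if_neg hf]
      push_neg at hf
      obtain ⟨m, hm⟩ := hf
      exact zeroInt _ ⟨m, Finset.mem_filter.2 ⟨Finset.mem_univ m, hm⟩⟩
  -- pointwise product identities
  have base : ∀ (i : Fin s) (ω : Ω), (∏ m, (w ω m) ^ (if m = i then 1 else 0)) = w ω i := by
    intro i ω
    rw [Finset.prod_eq_single i]
    · simp
    · intro b _ hb; simp [hb]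
    · simp
  have hP2 : ∀ (i j : Fin s) (ω : Ω), w ω i * w ω j
      = ∏ m, (w ω m) ^ ((if m = i then 1 else 0) + (if m = j then 1 else 0)) := by
    intro i j ω
    simp only [pow_add, Finset.prod_mul_distrib, base]
  have hP4 : ∀ (i j k l : Fin s) (ω : Ω), (w ω i * w ω j) * (w ω k * w ω l)
      = ∏ m, (w ω m) ^ ((if m = i then 1 else 0) + (if m = j then 1 else 0)
          + (if m = k then 1 else 0) + (if m = l then 1 else 0)) := by
    intro i j k l ω
    simp only [pow_add, Finset.prod_mul_distrib, base]
    ring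
  have E2 : ∀ i j : Fin s, (∫ ω, w ω i * w ω j ∂μ) = if i = j then 1 else 0 := by
    intro i j
    rw [show (fun ω => w ω i * w ω j) = fun ω => ∏ m, (w ω m)
        ^ ((if m = i then 1 else 0) + (if m = j then 1 else 0)) from funext (hP2 i j), momE]
    by_cases hij : i = j
    · subst hij
      rw [if_pos, if_pos rfl]
      intro m; by_cases hm : m = i <;> simp [hm]
    · rw [if_neg, if_neg hij]
      intro h
      have := h i
      simp [hij] at this
  have E4 : ∀ i j k l : Fin s, (∫ ω, (w ω i * w ω j) * (w ω k * w ω l) ∂μ)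
      = if ((i = j ∧ k = l) ∨ (i = k ∧ j = l) ∨ (i = l ∧ j = k)) then 1 else 0 := by
    intro i j k l
    rw [show (fun ω => (w ω i * w ω j) * (w ω k * w ω l)) = fun ω => ∏ m, (w ω m)
        ^ ((if m = i then 1 else 0) + (if m = j then 1 else 0)
          + (if m = k then 1 else 0) + (if m = l then 1 else 0)) from funext (hP4 i j k l), momE]
    simp only [rademacher_even_four_iff]
  -- the quadratic form as a sum over pairs
  have hXsum : ∀ ω, (w ω) ⬝ᵥ A.mulVec (w ω)
      = ∑ p : Fin s × Fin s, A p.1 p.2 * (w ω p.1 * w ω p.2) := by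
    intro ω
    rw [Fintype.sum_prod_type]
    simp only [dotProduct, Matrix.mulVec, Finset.mul_sum]
    exact Finset.sum_congr rfl fun i _ => Finset.sum_congr rfl fun j _ => by ring
  have intg2 : ∀ i j : Fin s, Integrable (fun ω => w ω i * w ω j) μ := by
    intro i j
    rw [show (fun ω => w ω i * w ω j) = fun ω => ∏ m, (w ω m)
        ^ ((if m = i then 1 else 0) + (if m = j then 1 else 0)) from funext (hP2 i j)]
    exact intgP _
  have intg4 : ∀ i j k l : Fin s, Integrable (fun ω => (w ω i * w ω j) * (w ω k * w ω l)) μ := by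
    intro i j k l
    rw [show (fun ω => (w ω i * w ω j) * (w ω k * w ω l)) = fun ω => ∏ m, (w ω m)
        ^ ((if m = i then 1 else 0) + (if m = j then 1 else 0)
          + (if m = k then 1 else 0) + (if m = l then 1 else 0)) from funext (hP4 i j k l)]
    exact intgP _
  have intgX : Integrable (fun ω => (w ω) ⬝ᵥ A.mulVec (w ω)) μ := by
    rw [show (fun ω => (w ω) ⬝ᵥ A.mulVec (w ω)) = fun ω => ∑ p : Fin s × Fin s,
        A p.1 p.2 * (w ω p.1 * w ω p.2) from funext hXsum]
    exact integrable_finset_sum _ fun p _ => (intg2 p.1 p.2).const_mul _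
  have hX2sum : (fun ω => ((w ω) ⬝ᵥ A.mulVec (w ω))^2) = fun ω => ∑ p : Fin s × Fin s,
      ∑ q : Fin s × Fin s, (A p.1 p.2 * A q.1 q.2)
        * ((w ω p.1 * w ω p.2) * (w ω q.1 * w ω q.2)) := by
    funext ω
    rw [hXsum ω, sq, Finset.sum_mul_sum]
    exact Finset.sum_congr rfl fun p _ => Finset.sum_congr rfl fun q _ => by ring
  have intgX2 : Integrable (fun ω => ((w ω) ⬝ᵥ A.mulVec (w ω))^2) μ := by
    rw [hX2sum]
    exact integrable_finset_sum _ fun p _ =>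
      integrable_finset_sum _ fun q _ => (intg4 _ _ _ _).const_mul _
  -- mean
  set tr := ∑ i, A i i with htr
  have hEX : (∫ ω, (w ω) ⬝ᵥ A.mulVec (w ω) ∂μ) = tr := by
    rw [show (fun ω => (w ω) ⬝ᵥ A.mulVec (w ω)) = fun ω => ∑ p : Fin s × Fin s,
        A p.1 p.2 * (w ω p.1 * w ω p.2) from funext hXsum,
      integral_finset_sum _ fun p _ => (intg2 p.1 p.2).const_mul _]
    calc ∑ p : Fin s × Fin s, ∫ ω, A p.1 p.2 * (w ω p.1 * w ω p.2) ∂μ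
        = ∑ p : Fin s × Fin s, A p.1 p.2 * (if p.1 = p.2 then 1 else 0) := by
          refine Finset.sum_congr rfl fun p _ => ?_
          rw [integral_const_mul, E2]
      _ = tr := by
          rw [Fintype.sum_prod_type]
          simp [Finset.sum_ite_eq, htr]
  -- second moment
  have hEX2 : (∫ ω, ((w ω) ⬝ᵥ A.mulVec (w ω))^2 ∂μ)
      = ∑ p : Fin s × Fin s, ∑ q : Fin s × Fin s, (A p.1 p.2 * A q.1 q.2) *
        (if ((p.1 = p.2 ∧ q.1 = q.2) ∨ (p.1 = q.1 ∧ p.2 = q.2) ∨ (p.1 = q.2 ∧ p.2 = q.1))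
          then 1 else 0) := by
    rw [hX2sum, integral_finset_sum _ fun p _ =>
      integrable_finset_sum _ fun q _ => (intg4 _ _ _ _).const_mul _]
    refine Finset.sum_congr rfl fun p _ => ?_
    rw [integral_finset_sum _ fun q _ => (intg4 _ _ _ _).const_mul _]
    refine Finset.sum_congr rfl fun q _ => ?_
    rw [integral_const_mul, E4]
  -- combinatorial evaluation of the fourth-moment sum
  have S1 : (∑ p : Fin s × Fin s, ∑ q : Fin s × Fin s,
      (if p.1 = p.2 then A p.1 p.2 else 0) * (if q.1 = q.2 then A q.1 q.2 else 0)) = tr * tr := by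
    rw [← Finset.sum_mul_sum]
    have hd : (∑ p : Fin s × Fin s, (if p.1 = p.2 then A p.1 p.2 else 0)) = tr := by
      rw [Fintype.sum_prod_type]
      simp [Finset.sum_ite_eq, htr]
    rw [hd]
  have S2 : (∑ p : Fin s × Fin s, ∑ q : Fin s × Fin s,
      (if q.1 = p.1 ∧ q.2 = p.2 then A p.1 p.2 * A q.1 q.2 else 0))
      = ∑ i, ∑ j, (A i j)^2 := by
    rw [Fintype.sum_prod_type]
    refine Finset.sum_congr rfl fun i _ => Finset.sum_congr rfl fun j _ => ?_
    rw [Fintype.sum_prod_type]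
    simp [ite_and, Finset.sum_ite_eq', sq]
  have S3 : (∑ p : Fin s × Fin s, ∑ q : Fin s × Fin s,
      (if q.1 = p.2 ∧ q.2 = p.1 then A p.1 p.2 * A q.1 q.2 else 0))
      = ∑ i, ∑ j, (A i j)^2 := by
    rw [Fintype.sum_prod_type]
    refine Finset.sum_congr rfl fun i _ => Finset.sum_congr rfl fun j _ => ?_
    rw [Fintype.sum_prod_type]
    have : A j i = A i j := hA.apply i j
    simp [ite_and, Finset.sum_ite_eq', this, sq]
  have S4 : (∑ p : Fin s × Fin s, ∑ q : Fin s × Fin s,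
      (if p.1 = p.2 ∧ q.1 = p.1 ∧ q.2 = p.1 then A p.1 p.2 * A q.1 q.2 else 0))
      = ∑ i, (A i i)^2 := by
    rw [Fintype.sum_prod_type]
    refine Finset.sum_congr rfl fun i _ => ?_
    have hinner : ∀ j : Fin s, (∑ q : Fin s × Fin s,
        (if i = j ∧ q.1 = i ∧ q.2 = i then A i j * A q.1 q.2 else 0))
        = if i = j then A i j * A i i else 0 := by
      intro j
      rw [Fintype.sum_prod_type]
      simp [ite_and, Finset.sum_ite_eq', Finset.sum_ite_eq]
    simp only [hinner]
    simp [Finset.sum_ite_eq, sq]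
  have hcomb : (∑ p : Fin s × Fin s, ∑ q : Fin s × Fin s, (A p.1 p.2 * A q.1 q.2) *
        (if ((p.1 = p.2 ∧ q.1 = q.2) ∨ (p.1 = q.1 ∧ p.2 = q.2) ∨ (p.1 = q.2 ∧ p.2 = q.1))
          then 1 else 0))
      = tr * tr + (∑ i, ∑ j, (A i j)^2) + (∑ i, ∑ j, (A i j)^2) - 2 * ∑ i, (A i i)^2 := by
    calc (∑ p : Fin s × Fin s, ∑ q : Fin s × Fin s, (A p.1 p.2 * A q.1 q.2) *
        (if ((p.1 = p.2 ∧ q.1 = q.2) ∨ (p.1 = q.1 ∧ p.2 = q.2) ∨ (p.1 = q.2 ∧ p.2 = q.1))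
          then 1 else 0))
        = ∑ p : Fin s × Fin s, ∑ q : Fin s × Fin s,
          ((if p.1 = p.2 then A p.1 p.2 else 0) * (if q.1 = q.2 then A q.1 q.2 else 0)
            + (if q.1 = p.1 ∧ q.2 = p.2 then A p.1 p.2 * A q.1 q.2 else 0)
            + (if q.1 = p.2 ∧ q.2 = p.1 then A p.1 p.2 * A q.1 q.2 else 0)
            - 2 * (if p.1 = p.2 ∧ q.1 = p.1 ∧ q.2 = p.1 then A p.1 p.2 * A q.1 q.2 else 0)) :=
          Finset.sum_congr rfl fun p _ => Finset.sum_congr rfl fun q _ =>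
            rademacher_pt A p.1 p.2 q.1 q.2
      _ = (∑ p : Fin s × Fin s, ∑ q : Fin s × Fin s,
            (if p.1 = p.2 then A p.1 p.2 else 0) * (if q.1 = q.2 then A q.1 q.2 else 0))
          + (∑ p : Fin s × Fin s, ∑ q : Fin s × Fin s,
            (if q.1 = p.1 ∧ q.2 = p.2 then A p.1 p.2 * A q.1 q.2 else 0))
          + (∑ p : Fin s × Fin s, ∑ q : Fin s × Fin s,
            (if q.1 = p.2 ∧ q.2 = p.1 then A p.1 p.2 * A q.1 q.2 else 0))
          - (∑ p : Fin s × Fin s, ∑ q : Fin s × Fin s,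
            2 * (if p.1 = p.2 ∧ q.1 = p.1 ∧ q.2 = p.1 then A p.1 p.2 * A q.1 q.2 else 0)) := by
          simp only [Finset.sum_add_distrib, Finset.sum_sub_distrib]
      _ = tr * tr + (∑ i, ∑ j, (A i j)^2) + (∑ i, ∑ j, (A i j)^2) - 2 * ∑ i, (A i i)^2 := by
          have h4 : (∑ p : Fin s × Fin s, ∑ q : Fin s × Fin s,
              2 * (if p.1 = p.2 ∧ q.1 = p.1 ∧ q.2 = p.1 then A p.1 p.2 * A q.1 q.2 else 0))
              = 2 * ∑ i, (A i i)^2 := by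
            simp only [← Finset.mul_sum]
            rw [S4]
          rw [S1, S2, S3, h4]
  -- final assembly
  simp only [hEX]
  have key : (∫ ω, ((w ω) ⬝ᵥ A.mulVec (w ω) - tr)^2 ∂μ)
      = (∫ ω, ((w ω) ⬝ᵥ A.mulVec (w ω))^2 ∂μ) - tr^2 := by
    have h1 : (fun ω => ((w ω) ⬝ᵥ A.mulVec (w ω) - tr)^2)
        = fun ω => (((w ω) ⬝ᵥ A.mulVec (w ω))^2 - (2*tr) * ((w ω) ⬝ᵥ A.mulVec (w ω))) + tr^2 := by
      funext ω; ring
    have hint2 : Integrable (fun ω => (2*tr) * ((w ω) ⬝ᵥ A.mulVec (w ω))) μ :=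
      intgX.const_mul (2*tr)
    have hintsub : Integrable (fun ω => ((w ω) ⬝ᵥ A.mulVec (w ω))^2
        - (2*tr) * ((w ω) ⬝ᵥ A.mulVec (w ω))) μ := intgX2.sub hint2
    rw [h1, integral_add hintsub (integrable_const _),
      integral_sub intgX2 hint2, integral_const_mul, hEX, integral_const]
    simp only [probReal_univ, measure_univ, ENNReal.toReal_one, one_smul, smul_eq_mul, one_mul]
    ring
  rw [key, hEX2, hcomb]
  ring
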